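/- arXiv:2308.08848 — 9 statements merged into one kernel-verified Lean document; each statement's English description precedes it below -/
import Mathlib

section
/- Let n = d·e be a squarefree positive integer and let t be an integer whose residue class modulo e has multiplicative order d in (ℤ/eℤ)ˣ. In the group G(d,e,t), the conjugacy class of the element (b, a) (corresponding to x^a y^b) has exactly k · e / gcd(e, t^a − 1) elements, where k is the smallest positive integer such that b·(t^k − 1) ≡ 0 modulo gcd(e, t^a − 1). -/
/-!
Since `ℤ/dℤ` is abelian, conjugating `(b, a)` by `(c, s)` gives `(u^s b + (1 - u^a) c, a)`.
The multiples of `1 - u^a = 1 - t^a` in `ℤ/eℤ` are exactly the kernel of the reduction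
`ψ : ℤ/eℤ → ℤ/gℤ`, `g = gcd(e, t^a - 1)`. Hence the class is in bijection with the preimage
under `ψ` of the orbit of `b` under multiplication by powers of `t` in `ℤ/gℤ`. That orbit has
`k` elements, the minimal period of `b`, and each fibre of `ψ` has `e / g` elements.
-/

/-- The units of `ZMod e` act on `Multiplicative (ZMod e)` as (multiplicative) automorphisms. -/
def unitsMulAut (e : ℕ) : (ZMod e)ˣ →* MulAut (Multiplicative (ZMod e)) where
  toFun u := AddEquiv.toMultiplicative (DistribMulAction.toAddAut (ZMod e)ˣ (ZMod e) u)
  map_one' := by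
    ext x
    show Multiplicative.ofAdd ((1 : (ZMod e)ˣ) • x.toAdd) = x
    simp
  map_mul' u v := by
    ext x
    show Multiplicative.ofAdd (((u * v) : (ZMod e)ˣ) • x.toAdd)
      = Multiplicative.ofAdd (u • v • x.toAdd)
    rw [mul_smul]

/-- The homomorphism `Multiplicative (ZMod d) →* (ZMod e)ˣ` sending `a` to `u ^ a`,
well defined since `u ^ d = 1`. -/
def zmodPowHom {e : ℕ} (d : ℕ) (u : (ZMod e)ˣ) (hu : u ^ d = 1) :
    Multiplicative (ZMod d) →* (ZMod e)ˣ :=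
  AddMonoidHom.toMultiplicativeLeft
    (ZMod.lift d ⟨zmultiplesHom (Additive (ZMod e)ˣ) (Additive.ofMul u), by
      simpa [zmultiplesHom, ← ofMul_pow] using congrArg Additive.ofMul hu⟩)

/-- The group `G(d,e,t)` where `u` is the unit of `ZMod e` given by `t` :
the semidirect product `(ℤ/eℤ) ⋊ (ℤ/dℤ)` in which `a ∈ ℤ/dℤ` acts on `ℤ/eℤ` by
`b ↦ t ^ a * b`.  This is the group with presentation
`⟨x, y | x ^ d = 1, y ^ e = 1, x⁻¹ * y * x = y ^ t⟩`, the element `(b, a)`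
corresponding to `x ^ a * y ^ b`. -/
abbrev Gdet (d e : ℕ) (u : (ZMod e)ˣ) (hu : u ^ d = 1) : Type :=
  SemidirectProduct (Multiplicative (ZMod e)) (Multiplicative (ZMod d))
    ((unitsMulAut e).comp (zmodPowHom d u hu))

open MulAction Function Multiplicative Subgroup

theorem SemidirectProduct.conjugatesOf_eq_image {N G : Type*} [Group N] [CommGroup G]
    {φ : G →* MulAut N} (x : N ⋊[φ] G) :
    conjugatesOf x = (fun n : N => (⟨n, x.right⟩ : N ⋊[φ] G)) ''
      {n | ∃ c : N, ∃ s : G, c * φ s x.left * φ x.right c⁻¹ = n} := by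
  have hφ (s : G) (c : N) : φ s (φ x.right ((φ s).symm c)) = φ x.right c := by
    rw [← MulAut.inv_def, ← map_inv, ← MulAut.mul_apply, ← MulAut.mul_apply, ← map_mul,
      ← map_mul, mul_inv_cancel_comm]
  ext y
  simp only [conjugatesOf, Set.mem_ofPred_eq, isConj_iff, Set.mem_image]
  constructor
  · rintro ⟨⟨c, s⟩, rfl⟩
    exact ⟨_, ⟨c, s, rfl⟩, by ext <;> simp [mul_assoc, hφ, mul_comm s]⟩
  · rintro ⟨n, ⟨c, s, rfl⟩, rfl⟩
    exact ⟨⟨c, s⟩, by ext <;> simp [mul_assoc, hφ, mul_comm s]⟩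

theorem SemidirectProduct.card_conjugatesOf {N G : Type*} [Group N] [CommGroup G]
    {φ : G →* MulAut N} (x : N ⋊[φ] G) :
    Nat.card (conjugatesOf x) =
      Nat.card {n | ∃ c : N, ∃ s : G, c * φ s x.left * φ x.right c⁻¹ = n} := by
  rw [conjugatesOf_eq_image, Nat.card_image_of_injective]
  exact fun _ _ h => congrArg SemidirectProduct.left h

theorem AddMonoidHom.card_preimage_of_surjective {A B : Type*} [AddGroup A] [AddGroup B]
    {f : A →+ B} (hf : Surjective f) (s : Set B) :
    Nat.card (f ⁻¹' s) = Nat.card f.ker * Nat.card s := by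
  let q := QuotientAddGroup.quotientKerEquivOfSurjective f hf
  have : f ⁻¹' s = QuotientAddGroup.mk ⁻¹' (q ⁻¹' s) := rfl
  rw [this, Nat.card_congr (QuotientAddGroup.preimageMkEquivAddSubgroupProdSet _ _),
    Nat.card_prod, Nat.card_preimage_of_injective q.injective (by simp [q.surjective.range_eq])]

theorem Function.minimalPeriod_eq_of_isLeast {α : Type*} {f : α → α} {x : α} {k : ℕ}
    (hk : IsLeast {n | 0 < n ∧ IsPeriodicPt f n x} k) : minimalPeriod f x = k :=
  le_antisymm (hk.1.2.minimalPeriod_le hk.1.1)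
    (hk.2 ⟨hk.1.2.minimalPeriod_pos hk.1.1, isPeriodicPt_minimalPeriod f x⟩)

theorem RingHom.apply_mem_orbit_zpowers_map_iff {R S : Type*} [CommRing R] [CommRing S]
    (ψ : R →+* S) (u : Rˣ) (b y : R) :
    ψ y ∈ orbit (zpowers (Units.map (ψ : R →* S) u)) (ψ b) ↔
      ∃ v ∈ zpowers u, ψ (y - v * b) = 0 := by
  have hsmul (n : ℤ) : Units.map (ψ : R →* S) u ^ n • ψ b = ψ ((u ^ n : Rˣ) * b) := by
    rw [← map_zpow, Units.smul_def, Units.coe_map, map_mul]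
    rfl
  rw [mem_orbit_iff]
  constructor
  · rintro ⟨⟨_, n, rfl⟩, h⟩
    refine ⟨_, zpow_mem (mem_zpowers u) n, ?_⟩
    rw [map_sub, ← h, sub_eq_zero]
    exact hsmul n
  · rintro ⟨_, ⟨n, rfl⟩, h⟩
    rw [map_sub, sub_eq_zero] at h
    exact ⟨⟨_, n, rfl⟩, (hsmul n).trans h.symm⟩

theorem ZMod.intCast_dvd_intCast_iff_gcd_dvd {e : ℕ} {c m : ℤ} :
    (c : ZMod e) ∣ (m : ZMod e) ↔ (Int.gcd e c : ℤ) ∣ m := by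
  constructor
  · rintro ⟨w, hw⟩
    obtain ⟨y, rfl⟩ := ZMod.intCast_surjective w
    obtain ⟨x, hx⟩ :=
      (ZMod.intCast_eq_intCast_iff_dvd_sub (c * y) m e).mp (by push_cast; exact hw.symm)
    have : m = e * x + c * y := by linear_combination hx
    rw [this]
    exact dvd_add ((Int.gcd_dvd_left _ _).mul_right _) ((Int.gcd_dvd_right _ _).mul_right _)
  · rintro ⟨q, rfl⟩
    refine ⟨Int.gcdB e c * q, ?_⟩
    rw [Int.gcd_eq_gcd_ab]
    push_cast
    rw [ZMod.natCast_self]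
    ring

theorem ZMod.intCast_dvd_iff_castHom_gcd_eq_zero {e : ℕ} (c : ℤ) (z : ZMod e) :
    (c : ZMod e) ∣ z ↔
      ZMod.castHom (Int.gcd_dvd_natAbs_left e c) (ZMod (Int.gcd e c)) z = 0 := by
  obtain ⟨m, rfl⟩ := ZMod.intCast_surjective z
  rw [map_intCast, ZMod.intCast_zmod_eq_zero_iff_dvd, intCast_dvd_intCast_iff_gcd_dvd]

theorem ZMod.card_ker_castHom {e g : ℕ} (he : 0 < e) (h : g ∣ e) :
    Nat.card (ZMod.castHom h (ZMod g) : ZMod e →+ ZMod g).ker = e / g := by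
  have := AddMonoidHom.card_preimage_of_surjective
    (f := (ZMod.castHom h (ZMod g) : ZMod e →+ ZMod g)) (ZMod.ringHom_surjective _) Set.univ
  rw [Set.preimage_univ, Nat.card_univ, Nat.card_univ, Nat.card_zmod, Nat.card_zmod] at this
  exact (Nat.div_eq_of_eq_mul_left (Nat.pos_of_dvd_of_pos h he) this).symm

theorem ZMod.minimalPeriod_units_smul_intCast {g : ℕ} {t b : ℤ} {τ : (ZMod g)ˣ}
    (hτ : (τ : ZMod g) = t) {k : ℕ} (hk : IsLeast {k : ℕ | 0 < k ∧ (g : ℤ) ∣ b * (t ^ k - 1)} k) :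
    minimalPeriod (τ • ·) (b : ZMod g) = k := by
  refine minimalPeriod_eq_of_isLeast ?_
  convert hk using 4 with n
  rw [IsPeriodicPt, IsFixedPt, smul_iterate]
  change τ ^ n • (b : ZMod g) = b ↔ _
  rw [Units.smul_def, smul_eq_mul, Units.val_pow_eq_pow_val, hτ,
    ← ZMod.intCast_zmod_eq_zero_iff_dvd]
  push_cast
  rw [mul_sub, mul_one, sub_eq_zero, mul_comm]

section Gdet

variable {d e : ℕ} {u : (ZMod e)ˣ} {hu : u ^ d = 1}

theorem zmodPowHom_ofAdd_intCast (n : ℤ) : zmodPowHom d u hu (ofAdd (n : ZMod d)) = u ^ n := by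
  unfold zmodPowHom
  rw [AddMonoidHom.toMultiplicativeLeft_apply_apply, toAdd_ofAdd, ZMod.lift_coe]
  show Additive.toMul (n • Additive.ofMul u) = u ^ n
  simp [← ofMul_zpow]

theorem range_zmodPowHom : (zmodPowHom d u hu).range = zpowers u := by
  ext v
  constructor
  · rintro ⟨s, rfl⟩
    obtain ⟨n, hn⟩ := ZMod.intCast_surjective (toAdd s)
    rw [← ofAdd_toAdd s, ← hn, zmodPowHom_ofAdd_intCast]
    exact zpow_mem (mem_zpowers u) n
  · rintro ⟨n, rfl⟩
    exact ⟨ofAdd (n : ZMod d), zmodPowHom_ofAdd_intCast n⟩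

theorem Gdet.card_conjugatesOf (b : ZMod e) (a : ZMod d) :
    Nat.card (conjugatesOf (⟨ofAdd b, ofAdd a⟩ : Gdet d e u hu)) =
      Nat.card {y : ZMod e | ∃ v ∈ zpowers u,
        ((zmodPowHom d u hu (ofAdd a) : ZMod e) - 1) ∣ y - v * b} := by
  rw [SemidirectProduct.card_conjugatesOf]
  refine Nat.card_congr (Equiv.subtypeEquiv toAdd fun n => ?_)
  simp only [Set.mem_ofPred_eq, ← range_zmodPowHom (hu := hu), MonoidHom.mem_range,
    exists_exists_eq_and]
  constructor
  · rintro ⟨c, s, rfl⟩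
    refine ⟨s, -toAdd c, ?_⟩
    show toAdd c + zmodPowHom d u hu s * b + zmodPowHom d u hu (ofAdd a) * -toAdd c
      - zmodPowHom d u hu s * b = _
    ring
  · rintro ⟨s, c, hc⟩
    refine ⟨ofAdd (-c), s, ?_⟩
    apply toAdd.injective
    show -c + zmodPowHom d u hu s * b + zmodPowHom d u hu (ofAdd a) * -(-c) = toAdd n
    linear_combination -hc

end Gdet

/-- **Conjugacy class sizes in groups of squarefree order.**
Let `n = d * e` be a squarefree positive integer and `t` an integer whose residue class
mod `e` has multiplicative order `d` in `(ℤ/eℤ)ˣ`.  In `G(d,e,t)`, the conjugacy class of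
the element `(b, a)` (corresponding to `x^a y^b`) has exactly `k * e / gcd (e, t^a - 1)`
elements, where `k` is the smallest positive integer with
`b * (t^k - 1) ≡ 0 mod gcd (e, t^a - 1)`. -/
theorem classSize_of_squarefree (d e : ℕ) (he : 0 < e) (t : ℤ) (u : (ZMod e)ˣ)
    (hu : (u : ZMod e) = (t : ZMod e)) (hord : orderOf u = d)
    (a : ℕ) (b : ℤ) (k : ℕ)
    (hk : IsLeast {k : ℕ | 0 < k ∧ (Int.gcd e (t ^ a - 1) : ℤ) ∣ b * (t ^ k - 1)} k) :
    Nat.card (conjugatesOf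
        (⟨Multiplicative.ofAdd (b : ZMod e), Multiplicative.ofAdd (a : ZMod d)⟩ :
          Gdet d e u (by rw [← hord]; exact pow_orderOf_eq_one u)))
      = k * e / Int.gcd e (t ^ a - 1) := by
  set g := Int.gcd e (t ^ a - 1)
  have hge : g ∣ e := Int.gcd_dvd_natAbs_left e (t ^ a - 1)
  set ψ := ZMod.castHom hge (ZMod g)
  have hψu : (Units.map (ψ : ZMod e →* ZMod g) u : ZMod g) = t := by
    rw [Units.coe_map, MonoidHom.coe_coe, hu, map_intCast]
  have hua : ((u ^ (a : ℤ) : (ZMod e)ˣ) : ZMod e) - 1 = ((t ^ a - 1 : ℤ) : ZMod e) := by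
    rw [zpow_natCast, Units.val_pow_eq_pow_val, hu, Int.cast_sub, Int.cast_pow, Int.cast_one]
  have hclass : {y : ZMod e | ∃ v ∈ zpowers u, ((t ^ a - 1 : ℤ) : ZMod e) ∣ y - v * b} =
      (ψ : ZMod e →+ ZMod g) ⁻¹' orbit (zpowers (Units.map (ψ : ZMod e →* ZMod g) u)) (ψ b) := by
    ext y
    rw [Set.mem_preimage, AddMonoidHom.coe_coe, RingHom.apply_mem_orbit_zpowers_map_iff]
    simp only [Set.mem_ofPred_eq, ZMod.intCast_dvd_iff_castHom_gcd_eq_zero]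
    rfl
  rw [Gdet.card_conjugatesOf, ← Int.cast_natCast (R := ZMod d), zmodPowHom_ofAdd_intCast, hua,
    hclass, AddMonoidHom.card_preimage_of_surjective (f := (ψ : ZMod e →+ ZMod g))
      (ZMod.ringHom_surjective ψ), ZMod.card_ker_castHom he,
    Nat.card_congr (orbitZPowersEquiv _ _), Nat.card_zmod, map_intCast,
    ZMod.minimalPeriod_units_smul_intCast hψu hk, mul_comm, Nat.mul_div_assoc _ hge]
end

section
/- Let G be a finite group whose order is squarefree, and let k(G) denote the number of conjugacy classes of G. Then |G| ≤ k(G)³. -/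
/-!
A group of squarefree order is a Z-group, so its commutator subgroup `G'` is cyclic.
An abelian subgroup `H` supplies `|H|²` of the `k(G)·|G|` commuting pairs of `G`, whence
`|G| ≤ k(G)·|G : G'|²`; and `|G : G'| ≤ k(G)` because the conjugacy classes of `G` map onto
those of the abelian group `G/G'`, which are its elements.
-/

theorem Subgroup.card_le_card_conjClasses_mul_index_sq {G : Type*} [Group G] [Finite G]
    (H : Subgroup G) [IsMulCommutative H] :
    Nat.card G ≤ Nat.card (ConjClasses G) * H.index ^ 2 := by
  have hG : (0 : ℚ) < Nat.card G := Nat.cast_pos.mpr Nat.card_pos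
  have h := H.commProb_subgroup_le
  rw [commProb_eq_one_iff.mpr ‹_›, commProb_def', div_mul_eq_mul_div, le_div_iff₀ hG,
    one_mul] at h
  exact_mod_cast h

theorem index_commutator_le_card_conjClasses (G : Type*) [Group G] [Finite (ConjClasses G)] :
    (commutator G).index ≤ Nat.card (ConjClasses G) :=
  calc (commutator G).index = Nat.card (ConjClasses (Abelianization G)) :=
        Nat.card_congr (ConjClasses.mkEquiv (α := Abelianization G))
    _ ≤ Nat.card (ConjClasses G) :=
        Nat.card_le_card_of_surjective _
          (ConjClasses.map_surjective (f := Abelianization.of) QuotientGroup.mk_surjective)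

/-- **Groups of squarefree order satisfy `|G| ≤ k(G)³`.**
If `G` is a finite group whose order is squarefree and `k(G)` denotes its number of
conjugacy classes, then `|G| ≤ k(G)^3`. -/
theorem card_le_card_conjClasses_cube (G : Type*) [Group G] [Finite G]
    (h : Squarefree (Nat.card G)) :
    Nat.card G ≤ (Nat.card (ConjClasses G)) ^ 3 := by
  have := IsZGroup.of_squarefree h
  have := IsZGroup.isCyclic_commutator G
  calc Nat.card G ≤ Nat.card (ConjClasses G) * (commutator G).index ^ 2 :=
        (commutator G).card_le_card_conjClasses_mul_index_sq
    _ ≤ Nat.card (ConjClasses G) * Nat.card (ConjClasses G) ^ 2 := by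
        gcongr; exact index_commutator_le_card_conjClasses G
    _ = Nat.card (ConjClasses G) ^ 3 := by ring
end

section
/- Let e be a squarefree positive integer and t an integer whose residue class modulo e has multiplicative order d in (ℤ/eℤ)ˣ, and for each positive integer s set α_s = gcd(e, t^s − 1). Then for every positive integer k, α_k = α_{gcd(k,d)}. -/
/-! Since `u ^ d = 1`, `e ∣ t ^ d - 1`. A common divisor `m` of `e` and `t ^ k - 1` therefore
divides both `t ^ k - 1` and `t ^ d - 1`; in `ℤ ⧸ (m)` the exponents `n` with `t ^ n = 1` are closed
under `gcd`, so `m ∣ t ^ gcd k d - 1`. Conversely `t ^ g - 1 ∣ t ^ k - 1` whenever `g ∣ k`. -/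

theorem dvd_pow_gcd_sub_one_iff {R : Type*} [CommRing R] (x t : R) (a b : ℕ) :
    x ∣ t ^ a.gcd b - 1 ↔ x ∣ t ^ a - 1 ∧ x ∣ t ^ b - 1 := by
  simp only [← Ideal.Quotient.eq_zero_iff_dvd, map_sub, map_pow, map_one, sub_eq_zero]
  exact pow_gcd_eq_one

theorem Int.gcd_pow_sub_one_eq_gcd_pow_gcd_sub_one {e t : ℤ} {d : ℕ} (hd : e ∣ t ^ d - 1)
    (k : ℕ) : e.gcd (t ^ k - 1) = e.gcd (t ^ k.gcd d - 1) := by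
  have common_dvd_iff (m : ℤ) (hm : m ∣ e) : m ∣ t ^ k.gcd d - 1 ↔ m ∣ t ^ k - 1 := by
    rw [dvd_pow_gcd_sub_one_iff]
    exact and_iff_left (hm.trans hd)
  apply Nat.dvd_antisymm <;> rw [← Int.natCast_dvd_natCast]
  · exact Int.dvd_coe_gcd (Int.gcd_dvd_left _ _)
      ((common_dvd_iff _ (Int.gcd_dvd_left _ _)).mpr (Int.gcd_dvd_right _ _))
  · exact Int.dvd_coe_gcd (Int.gcd_dvd_left _ _)
      ((common_dvd_iff _ (Int.gcd_dvd_left _ _)).mp (Int.gcd_dvd_right _ _))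

theorem dvd_pow_orderOf_sub_one {e : ℕ} {t : ℤ} {u : (ZMod e)ˣ} (hu : (u : ZMod e) = t) :
    (e : ℤ) ∣ t ^ orderOf u - 1 := by
  rw [← ZMod.intCast_zmod_eq_zero_iff_dvd, Int.cast_sub, Int.cast_pow, ← hu,
    ← Units.val_pow_eq_pow_val, pow_orderOf_eq_one, Int.cast_one, Units.val_one, sub_self]

theorem alpha_eq_alpha_gcd_with_d_general (e d : ℕ) (t : ℤ)
    (u : (ZMod e)ˣ) (hu : (u : ZMod e) = (t : ZMod e)) (hord : orderOf u = d)
    (k : ℕ) :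
    Int.gcd (e : ℤ) (t ^ k - 1) = Int.gcd (e : ℤ) (t ^ (Nat.gcd k d) - 1) :=
  Int.gcd_pow_sub_one_eq_gcd_pow_gcd_sub_one (hord ▸ dvd_pow_orderOf_sub_one hu) k

/-- **The `α`-sequence only depends on indices mod `d`.**
Let `e` be a squarefree positive integer and `t` an integer whose residue class mod `e`
has multiplicative order `d` in `(ℤ/eℤ)ˣ`; for positive `s` set `α s = gcd (e, t^s - 1)`.
Then `α k = α (gcd (k, d))` for every positive integer `k`. -/
theorem alpha_eq_alpha_gcd_with_d (e d : ℕ) (he : 0 < e) (hsq : Squarefree e) (t : ℤ)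
    (u : (ZMod e)ˣ) (hu : (u : ZMod e) = (t : ZMod e)) (hord : orderOf u = d)
    (k : ℕ) (hk : 0 < k) :
    Int.gcd (e : ℤ) (t ^ k - 1) = Int.gcd (e : ℤ) (t ^ (Nat.gcd k d) - 1) :=
  alpha_eq_alpha_gcd_with_d_general e d t u hu hord k
end

section
/- Let n = d·e be a squarefree positive integer and let t be an integer whose residue class modulo e has multiplicative order d in (ℤ/eℤ)ˣ. Set α_j = gcd(e, t^j − 1) for positive integers j. Then the number of conjugacy classes of the group G(d,e,t) equals d · ∑_{j ∣ d} (α_j / j²) · ∑_{s ∣ (d/j)} μ(s)/s², where μ is the Möbius function and the sums are computed in the rational numbers. -/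
/-!
`Nat.card (ConjClasses G) * Nat.card G` is the number of commuting pairs in `G`. In
`G(d,e,t) = ℤ/e ⋊ ℤ/d` the elements `(b₁, a₁)` and `(b₂, a₂)` commute iff
`(t^a₂ - 1) b₁ = (t^a₁ - 1) b₂` in `ℤ/e`, a linear equation with
`e * gcd(e, t^a₁ - 1, t^a₂ - 1) = e * α_{gcd(a₁, a₂, d)}` solutions, because `t` has order
dividing `d` modulo `e`. It remains to sort the pairs `(a₁, a₂)` by `j = gcd(a₁, a₂, d)`:
by Möbius inversion there are `(d/j)² ∑_{s ∣ d/j} μ(s)/s²` of them.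
-/

open Finset ArithmeticFunction
open scoped ArithmeticFunction.Moebius

theorem Nat.card_filter_dvd_range {i d : ℕ} (h : i ∣ d) : #{a ∈ range d | i ∣ a} = d / i := by
  rcases Nat.eq_zero_or_pos i with rfl | hi
  · simp [zero_dvd_iff.mp h]
  have := Nat.count_modEq_card d hi 0
  simp only [Nat.count_eq_card_filter_range, Nat.modEq_zero_iff_dvd, Nat.zero_mod] at this
  simp [this, Nat.mod_eq_zero_of_dvd h]

theorem sum_range_sum_range_sum_divisors_gcd {M : Type*} [AddCommMonoid M] (g : ℕ → M) {d : ℕ}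
    (hd : d ≠ 0) :
    ∑ a ∈ range d, ∑ b ∈ range d, ∑ i ∈ ((a.gcd b).gcd d).divisors, g i
      = ∑ i ∈ d.divisors, (d / i) ^ 2 • g i := by
  have hdiv (a b : ℕ) : ((a.gcd b).gcd d).divisors = {i ∈ d.divisors | i ∣ a ∧ i ∣ b} := by
    ext i
    simp only [Nat.mem_divisors, mem_filter, Nat.dvd_gcd_iff, ne_eq, Nat.gcd_eq_zero_iff, hd]
    tauto
  simp only [hdiv, sum_filter]
  rw [sum_congr rfl fun a _ => sum_comm, sum_comm]
  refine sum_congr rfl fun i hi => ?_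
  rw [← sum_product', ← sum_filter, sum_const, filter_product (p := (i ∣ ·)) (q := (i ∣ ·)),
    card_product, Nat.card_filter_dvd_range (Nat.dvd_of_mem_divisors hi), sq]

section

variable {K : Type*} [Field K] [CharZero K]

theorem ArithmeticFunction.pow_two_mul_moebius_apply (m : ℕ) :
    (pow 2 * μ : ArithmeticFunction K) m = m ^ 2 * ∑ s ∈ m.divisors, (μ s : K) / s ^ 2 := by
  rw [mul_apply, Nat.sum_divisorsAntidiagonal'
    (fun x y => (pow 2 : ArithmeticFunction K) x * (μ : ArithmeticFunction K) y), mul_sum]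
  refine sum_congr rfl fun s hs => ?_
  have hs0 : (s : K) ≠ 0 := Nat.cast_ne_zero.mpr (Nat.pos_of_mem_divisors hs).ne'
  rw [natCoe_apply, intCoe_apply, pow_apply, if_neg (by simp), Nat.cast_pow,
    Nat.cast_div_charZero (Nat.dvd_of_mem_divisors hs)]
  field_simp

theorem sum_range_sum_range_gcd (f : ℕ → K) {d : ℕ} (hd : d ≠ 0) :
    ∑ a ∈ range d, ∑ b ∈ range d, f ((a.gcd b).gcd d)
      = d ^ 2 * ∑ j ∈ d.divisors, f j / j ^ 2 * ∑ s ∈ (d / j).divisors, (μ s : K) / s ^ 2 := by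
  let F : ArithmeticFunction K := ⟨fun n => if n = 0 then 0 else f n, if_pos rfl⟩
  have hF : ∀ n ≠ 0, f n = ∑ i ∈ n.divisors, (μ * F) i := fun n hn => by
    rw [← coe_zeta_mul_apply, ← mul_assoc, coe_zeta_mul_coe_moebius, one_mul]
    exact (if_neg hn).symm
  let P : ArithmeticFunction K := pow 2
  calc ∑ a ∈ range d, ∑ b ∈ range d, f ((a.gcd b).gcd d)
      = ∑ i ∈ d.divisors, (d / i) ^ 2 • (μ * F) i := by
        rw [← sum_range_sum_range_sum_divisors_gcd _ hd]
        refine sum_congr rfl fun a _ => sum_congr rfl fun b _ => hF _ ?_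
        exact Nat.gcd_ne_zero_right hd
    _ = (P * (μ * F)) d := by
        rw [mul_apply, Nat.sum_divisorsAntidiagonal' (fun x y => P x * (μ * F) y)]
        refine sum_congr rfl fun i hi => ?_
        have hdi : d / i ≠ 0 := (Nat.div_pos (Nat.divisor_le hi) (Nat.pos_of_mem_divisors hi)).ne'
        simp [P, pow_apply, nsmul_eq_mul, hdi]
    _ = ∑ j ∈ d.divisors, (P * μ) (d / j) * f j := by
        rw [← mul_assoc, mul_apply, Nat.sum_divisorsAntidiagonal' (fun x y => (P * μ) x * F y)]
        refine sum_congr rfl fun j hj => ?_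
        simp [F, (Nat.pos_of_mem_divisors hj).ne']
    _ = _ := by
        rw [mul_sum]
        refine sum_congr rfl fun j hj => ?_
        have hj0 : (j : K) ≠ 0 := Nat.cast_ne_zero.mpr (Nat.pos_of_mem_divisors hj).ne'
        rw [ArithmeticFunction.pow_two_mul_moebius_apply,
          Nat.cast_div_charZero (Nat.dvd_of_mem_divisors hj)]
        field_simp

end

theorem Int.natCast_dvd_pow_sub_one_iff {m : ℕ} {t : ℤ} {k : ℕ} :
    (m : ℤ) ∣ t ^ k - 1 ↔ orderOf (t : ZMod m) ∣ k := by
  rw [orderOf_dvd_iff_pow_eq_one, ← ZMod.intCast_zmod_eq_zero_iff_dvd, Int.cast_sub,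
    Int.cast_pow, Int.cast_one, sub_eq_zero]

theorem Nat.gcd_gcd_pow_sub_one {e d : ℕ} {t : ℤ} (h : (e : ℤ) ∣ t ^ d - 1) (a b : ℕ) :
    e.gcd ((t ^ a - 1).gcd (t ^ b - 1)) = Int.gcd e (t ^ (a.gcd b).gcd d - 1) := by
  refine Nat.dvd_left_iff_eq.mp fun m => ?_
  simp only [Nat.dvd_gcd_iff, Int.dvd_gcd_iff, Int.natCast_dvd_pow_sub_one_iff,
    Int.natCast_dvd_natCast]
  constructor
  · rintro ⟨hme, ha, hb⟩
    refine ⟨hme, ⟨ha, hb⟩, Int.natCast_dvd_pow_sub_one_iff.mp ?_⟩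
    exact (Int.natCast_dvd_natCast.mpr hme).trans h
  · rintro ⟨hme, ⟨ha, hb⟩, -⟩
    exact ⟨hme, ha, hb⟩

theorem ZMod.card_linear_eq_zero (n : ℕ) [NeZero n] (A B : ℤ) :
    Nat.card {p : ZMod n × ZMod n // (A : ZMod n) * p.1 + B * p.2 = 0}
      = n * n.gcd (A.gcd B) := by
  let ψ : ZMod n × ZMod n →+ ZMod n :=
    (AddMonoidHom.mulLeft (A : ZMod n)).comp (AddMonoidHom.fst _ _) +
      (AddMonoidHom.mulLeft (B : ZMod n)).comp (AddMonoidHom.snd _ _)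
  have hψ (p : ZMod n × ZMod n) : ψ p = A * p.1 + B * p.2 := rfl
  have hγ : ((A.gcd B : ℕ) : ZMod n) = A * A.gcdA B + B * A.gcdB B := by
    rw [← Int.cast_natCast, Int.gcd_eq_gcd_ab]
    push_cast
    rfl
  have hrange : ψ.range = AddSubgroup.zmultiples ((A.gcd B : ℕ) : ZMod n) := by
    apply le_antisymm
    · rintro _ ⟨p, rfl⟩
      have hdvd : ((A.gcd B : ℕ) : ZMod n) ∣ ψ p := by
        rw [hψ, ← Int.cast_natCast]
        exact dvd_add (dvd_mul_of_dvd_left (Int.cast_dvd_cast _ _ (Int.gcd_dvd_left A B)) _)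
          (dvd_mul_of_dvd_left (Int.cast_dvd_cast _ _ (Int.gcd_dvd_right A B)) _)
      obtain ⟨c, hc⟩ := hdvd
      obtain ⟨k, rfl⟩ := ZMod.intCast_surjective c
      exact AddSubgroup.mem_zmultiples_iff.mpr ⟨k, by rw [hc, zsmul_eq_mul, mul_comm]⟩
    · exact AddSubgroup.zmultiples_le.mpr ⟨(A.gcdA B, A.gcdB B), hγ.symm⟩
  have hdvd : n.gcd (A.gcd B) ∣ n := Nat.gcd_dvd_left n _
  have hcard : Nat.card ψ.ker * (n / n.gcd (A.gcd B)) = n * n := by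
    rw [← ZMod.addOrderOf_coe _ (NeZero.ne n), ← Nat.card_zmultiples, ← hrange,
      ← AddSubgroup.index_ker, AddSubgroup.card_mul_index, Nat.card_prod, Nat.card_zmod]
  refine Nat.eq_of_mul_eq_mul_right (Nat.div_pos (Nat.le_of_dvd (NeZero.pos n) hdvd)
    (Nat.gcd_pos_of_pos_left _ (NeZero.pos n))) ?_
  rw [mul_assoc, Nat.mul_div_cancel' hdvd]
  exact hcard

theorem ZMod.sum_val_eq_sum_range {M : Type*} [AddCommMonoid M] (n : ℕ) [NeZero n] (f : ℕ → M) :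
    ∑ a : ZMod n, f a.val = ∑ x ∈ range n, f x := by
  obtain ⟨m, rfl⟩ := Nat.exists_eq_succ_of_ne_zero (NeZero.ne n)
  exact Fin.sum_univ_eq_sum_range f (m + 1)

theorem SemidirectProduct.commute_iff {N G : Type*} [CommGroup N] [CommGroup G]
    {φ : G →* MulAut N} {x y : N ⋊[φ] G} :
    Commute x y ↔ x.left * φ x.right y.left = y.left * φ y.right x.left := by
  rw [Commute, SemiconjBy, SemidirectProduct.ext_iff, mul_left, mul_left, mul_right, mul_right,
    mul_comm x.right, and_iff_left rfl]

theorem zmodPowHom_apply {e d : ℕ} [NeZero d] {u : (ZMod e)ˣ} (hu : u ^ d = 1)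
    (a : Multiplicative (ZMod d)) : zmodPowHom d u hu a = u ^ a.toAdd.val := by
  have ha : a.toAdd = ((a.toAdd.val : ℤ) : ZMod d) := by simp
  rw [zmodPowHom, AddMonoidHom.coe_toMultiplicativeLeft, Function.comp_apply,
    Function.comp_apply]
  conv_lhs => rw [ha, ZMod.lift_coe]
  simp only [zmultiplesHom_apply, toMul_zsmul, toMul_ofMul, zpow_natCast]

namespace Gdet

variable {d e : ℕ} [NeZero d] {u : (ZMod e)ˣ} {hu : u ^ d = 1}

theorem commute_iff {x y : Gdet d e u hu} :
    Commute x y ↔ ((u : ZMod e) ^ y.right.toAdd.val - 1) * x.left.toAdd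
      = ((u : ZMod e) ^ x.right.toAdd.val - 1) * y.left.toAdd := by
  rw [SemidirectProduct.commute_iff, ← Multiplicative.toAdd.injective.eq_iff]
  simp only [MonoidHom.coe_comp, Function.comp_apply, zmodPowHom_apply, toAdd_mul]
  change x.left.toAdd + (u ^ _ : (ZMod e)ˣ) • y.left.toAdd
    = y.left.toAdd + (u ^ _ : (ZMod e)ˣ) • x.left.toAdd ↔ _
  simp only [Units.smul_def, Units.val_pow_eq_pow_val, smul_eq_mul]
  constructor <;> intro h <;> linear_combination -h

theorem card_commute_eq_sum [NeZero e] :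
    Nat.card {p : Gdet d e u hu × Gdet d e u hu // Commute p.1 p.2}
      = ∑ a : ZMod d × ZMod d, Nat.card {b : ZMod e × ZMod e //
          ((u : ZMod e) ^ a.2.val - 1) * b.1 = ((u : ZMod e) ^ a.1.val - 1) * b.2} := by
  rw [← Nat.card_sigma]
  exact Nat.card_congr
    { toFun := fun p => ⟨(p.1.1.right.toAdd, p.1.2.right.toAdd),
        ⟨(p.1.1.left.toAdd, p.1.2.left.toAdd), commute_iff.mp p.2⟩⟩
      invFun := fun s => ⟨(⟨.ofAdd s.2.1.1, .ofAdd s.1.1⟩, ⟨.ofAdd s.2.1.2, .ofAdd s.1.2⟩),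
        commute_iff.mpr s.2.2⟩
      left_inv := fun _ => rfl
      right_inv := fun _ => rfl }

theorem card_commute [NeZero e] {t : ℤ} (hut : (u : ZMod e) = t) :
    Nat.card {p : Gdet d e u hu × Gdet d e u hu // Commute p.1 p.2}
      = e * ∑ a ∈ range d, ∑ b ∈ range d, Int.gcd e (t ^ (a.gcd b).gcd d - 1) := by
  have hcast (k : ℕ) : ((t ^ k - 1 : ℤ) : ZMod e) = (u : ZMod e) ^ k - 1 := by
    rw [hut]; push_cast; rfl
  have htd : (e : ℤ) ∣ t ^ d - 1 := by
    rw [← ZMod.intCast_zmod_eq_zero_iff_dvd, hcast, ← Units.val_pow_eq_pow_val, hu,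
      Units.val_one, sub_self]
  have hsol (a b : ℕ) : Nat.card {x : ZMod e × ZMod e //
      ((u : ZMod e) ^ b - 1) * x.1 = ((u : ZMod e) ^ a - 1) * x.2}
        = e * Int.gcd e (t ^ (a.gcd b).gcd d - 1) := by
    rw [← Nat.gcd_gcd_pow_sub_one htd, Int.gcd_comm, ← Int.gcd_neg,
      ← ZMod.card_linear_eq_zero e (t ^ b - 1) (-(t ^ a - 1))]
    refine Nat.card_congr (Equiv.subtypeEquivRight fun x => ?_)
    rw [Int.cast_neg, hcast, hcast, neg_mul, ← sub_eq_add_neg, sub_eq_zero]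
  rw [card_commute_eq_sum, Fintype.sum_prod_type]
  simp only [hsol, ← ZMod.sum_val_eq_sum_range d, mul_sum]

end Gdet

open ArithmeticFunction in
/-- **Class number formula for groups of squarefree order.**
Let `n = d * e` be squarefree and `t` an integer whose residue class mod `e` has
multiplicative order `d` in `(ℤ/eℤ)ˣ`.  With `α j = gcd (e, t^j - 1)`, the number of
conjugacy classes of `G(d,e,t)` equals
`d * ∑_{j ∣ d} (α j / j²) * ∑_{s ∣ d/j} μ(s)/s²`, where `μ` is the Möbius function. -/
theorem classNumber_formula (d e : ℕ) (he : 0 < e) (t : ℤ) (u : (ZMod e)ˣ)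
    (hu : (u : ZMod e) = (t : ZMod e)) (hord : orderOf u = d) :
    (Nat.card (ConjClasses (Gdet d e u (by rw [← hord]; exact pow_orderOf_eq_one u))) : ℚ)
      = (d : ℚ) * ∑ j ∈ Nat.divisors d,
          ((Int.gcd (e : ℤ) (t ^ j - 1) : ℚ) / (j : ℚ) ^ 2) *
            ∑ s ∈ Nat.divisors (d / j), (moebius s : ℚ) / (s : ℚ) ^ 2 := by
  have : NeZero e := ⟨he.ne'⟩
  have hd : d ≠ 0 := hord ▸ (orderOf_pos u).ne'
  have : NeZero d := ⟨hd⟩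
  have hcard := Gdet.card_commute (hu := hord ▸ pow_orderOf_eq_one u) hu
  rw [card_comm_eq_card_conjClasses_mul_card, SemidirectProduct.card] at hcard
  simp only [Nat.card_eq_fintype_card, Fintype.card_multiplicative, ZMod.card] at hcard
  qify at hcard
  rw [sum_range_sum_range_gcd (fun j => ((Int.gcd e (t ^ j - 1) : ℕ) : ℚ)) hd] at hcard
  field_simp at hcard ⊢
  linear_combination hcard
end

section
/- Let e be a squarefree positive integer and t an integer whose residue class modulo e has multiplicative order d in (ℤ/eℤ)ˣ, and set α_j = gcd(e, t^j − 1). Then, as an identity of rational numbers, ∑_{k=1}^{d} ∑_{a=1}^{d} (1/k) · ∑_{l=0}^{k−1} (−1)^l · ∑_{1 ≤ j₁ < j₂ < ⋯ < j_l ≤ k−1} α_{gcd(d, a, k, j₁, j₂, …, j_l)} = d · ∑_{j ∣ d} (α_j / j²) · ∑_{s ∣ (d/j)} μ(s)/s², where μ is the Möbius function. -/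
open Finset ArithmeticFunction in

private lemma sum_divisors_antidiag_swap (d : ℕ) (F : ℕ × ℕ → ℚ) :
    ∑ k ∈ Nat.divisors d, ∑ x ∈ Nat.divisorsAntidiagonal k, F x
      = ∑ j ∈ Nat.divisors d, ∑ s ∈ Nat.divisors (d / j), F (s, j) := by
  rw [Finset.sum_sigma', Finset.sum_sigma']
  apply Finset.sum_nbij' (fun p => ⟨p.2.2, p.2.1⟩) (fun p => ⟨p.2 * p.1, (p.2, p.1)⟩)
  · rintro ⟨k, s, j⟩ hp
    simp only [Finset.mem_sigma, Nat.mem_divisors, Nat.mem_divisorsAntidiagonal] at hp ⊢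
    obtain ⟨⟨hkd, hd0⟩, hsj, hk0⟩ := hp
    have hjk : j ∣ k := hsj ▸ dvd_mul_left j s
    have hjd : j ∣ d := hjk.trans hkd
    have hj0 : j ≠ 0 := fun h => hk0 (by subst h; simpa using hsj.symm)
    refine ⟨⟨hjd, hd0⟩, (Nat.dvd_div_iff_mul_dvd hjd).mpr (by rw [mul_comm]; exact hsj ▸ hkd), ?_⟩
    exact (Nat.div_pos (Nat.le_of_dvd (Nat.pos_of_ne_zero hd0) hjd)
      (Nat.pos_of_ne_zero hj0)).ne'
  · rintro ⟨j, s⟩ hp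
    simp only [Finset.mem_sigma, Nat.mem_divisors, Nat.mem_divisorsAntidiagonal] at hp
    obtain ⟨⟨hjd, hd0⟩, hs, hdj0⟩ := hp
    have hj0 : j ≠ 0 := by rintro rfl; simp at hdj0
    have hs0 : s ≠ 0 := by rintro rfl; rw [zero_dvd_iff] at hs; exact hdj0 hs
    have hsjd : s * j ∣ d := by
      rw [mul_comm]; exact (Nat.dvd_div_iff_mul_dvd hjd).mp hs
    exact Finset.mem_sigma.mpr ⟨Nat.mem_divisors.mpr ⟨hsjd, hd0⟩,
      Nat.mem_divisorsAntidiagonal.mpr ⟨rfl, mul_ne_zero hs0 hj0⟩⟩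
  · rintro ⟨k, s, j⟩ hp
    simp only [Finset.mem_sigma, Nat.mem_divisors, Nat.mem_divisorsAntidiagonal] at hp
    obtain ⟨_, hsj, _⟩ := hp
    simp [hsj]
  · rintro ⟨j, s⟩ _; rfl
  · rintro ⟨k, s, j⟩ _; rfl

open Finset ArithmeticFunction in

private lemma inner_incl_excl (A B : ℕ → ℚ) (hAB : ∀ n > 0, ∑ i ∈ n.divisors, B i = A n)
    (d a k : ℕ) (hd : 0 < d) (hk : 0 < k) :
    ∑ l ∈ Finset.range k, (-1 : ℚ) ^ l *
        ∑ J ∈ (Finset.Icc 1 (k - 1)).powersetCard l,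
          A (Nat.gcd d (Nat.gcd a (Nat.gcd k (J.gcd _root_.id))))
      = if k ∣ d ∧ k ∣ a then B k else 0 := by
  set g : Finset ℕ → ℕ := fun J => Nat.gcd d (Nat.gcd a (Nat.gcd k (J.gcd _root_.id))) with hgdef
  set S : Finset ℕ := Finset.Icc 1 (k - 1) with hSdef
  have hS : #S = k - 1 := by simp [hSdef, Nat.card_Icc]
  have hg1 : ∀ J : Finset ℕ, A (g J) = ∑ c ∈ d.divisors, if c ∣ g J then B c else 0 := by
    intro J
    have hgd : g J ∣ d := Nat.gcd_dvd_left _ _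
    have hgpos : 0 < g J := Nat.gcd_pos_of_pos_left _ hd
    rw [← hAB _ hgpos, ← Nat.divisors_filter_dvd_of_dvd hd.ne' hgd, Finset.sum_filter]
  calc ∑ l ∈ Finset.range k, (-1 : ℚ) ^ l * ∑ J ∈ S.powersetCard l, A (g J)
      = ∑ J ∈ S.powerset, (-1 : ℚ) ^ #J * A (g J) := by
        rw [Finset.sum_powerset, hS, Nat.sub_add_cancel hk]
        refine Finset.sum_congr rfl fun l _ => ?_
        rw [Finset.mul_sum]
        exact Finset.sum_congr rfl fun J hJ => by rw [(Finset.mem_powersetCard.mp hJ).2]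
    _ = ∑ J ∈ S.powerset, ∑ c ∈ d.divisors,
          (if c ∣ g J then (-1 : ℚ) ^ #J * B c else 0) := by
        refine Finset.sum_congr rfl fun J _ => ?_
        rw [hg1 J, Finset.mul_sum]
        exact Finset.sum_congr rfl fun c _ => by rw [mul_ite, mul_zero]
    _ = ∑ c ∈ d.divisors, ∑ J ∈ S.powerset,
          (if c ∣ g J then (-1 : ℚ) ^ #J * B c else 0) := Finset.sum_comm
    _ = ∑ c ∈ d.divisors, (if c = k ∧ c ∣ a then B c else 0) := by
        refine Finset.sum_congr rfl fun c hc => ?_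
        have hc0 : 0 < c := Nat.pos_of_mem_divisors hc
        set T : Finset ℕ := S.filter (c ∣ ·) with hTdef
        have hiff : ∀ J ∈ S.powerset, (c ∣ g J ↔ c ∣ a ∧ c ∣ k ∧ J ⊆ T) := by
          intro J hJ
          rw [Finset.mem_powerset] at hJ
          constructor
          · intro h
            have h2 : c ∣ Nat.gcd a (Nat.gcd k (J.gcd _root_.id)) :=
              h.trans (Nat.gcd_dvd_right _ _)
            have h3 : c ∣ Nat.gcd k (J.gcd _root_.id) := h2.trans (Nat.gcd_dvd_right _ _)
            have h4 : c ∣ J.gcd _root_.id := h3.trans (Nat.gcd_dvd_right _ _)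
            exact ⟨h2.trans (Nat.gcd_dvd_left _ _), h3.trans (Nat.gcd_dvd_left _ _),
              fun x hx => Finset.mem_filter.mpr ⟨hJ hx, Finset.dvd_gcd_iff.mp h4 x hx⟩⟩
          · rintro ⟨ha, hk', hJT⟩
            exact Nat.dvd_gcd (Nat.dvd_of_mem_divisors hc) (Nat.dvd_gcd ha (Nat.dvd_gcd hk'
              (Finset.dvd_gcd fun x hx => (Finset.mem_filter.mp (hJT hx)).2)))
        by_cases hak : c ∣ a ∧ c ∣ k
        · have hstep : ∑ J ∈ S.powerset, (if c ∣ g J then (-1 : ℚ) ^ #J * B c else 0)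
              = ∑ J ∈ S.powerset, (if J ⊆ T then (-1 : ℚ) ^ #J * B c else 0) :=
            Finset.sum_congr rfl fun J hJ => by
              simp only [hiff J hJ, hak.1, hak.2, true_and]
          rw [hstep, ← Finset.sum_filter]
          have hPT : S.powerset.filter (· ⊆ T) = T.powerset := by
            ext J
            simp only [Finset.mem_filter, Finset.mem_powerset]
            exact ⟨fun h => h.2, fun h => ⟨h.trans (Finset.filter_subset _ _), h⟩⟩
          rw [hPT, ← Finset.sum_mul]
          have hsum : ∑ J ∈ T.powerset, (-1 : ℚ) ^ #J = if T = ∅ then 1 else 0 := by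
            calc ∑ J ∈ T.powerset, (-1 : ℚ) ^ #J
                = ((∑ J ∈ T.powerset, (-1 : ℤ) ^ #J : ℤ) : ℚ) := by push_cast; rfl
              _ = _ := by rw [Finset.sum_powerset_neg_one_pow_card]; split <;> simp
          have hTempty : T = ∅ ↔ c = k := by
            constructor
            · intro hT
              by_contra hne
              have hck : c < k := lt_of_le_of_ne (Nat.le_of_dvd hk hak.2) hne
              have hcT : c ∈ T := Finset.mem_filter.mpr
                ⟨Finset.mem_Icc.mpr ⟨hc0, by omega⟩, dvd_rfl⟩
              simp [hT] at hcT
            · rintro rfl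
              rw [Finset.filter_eq_empty_iff]
              intro x hx hdvd
              rw [hSdef, Finset.mem_Icc] at hx
              have := Nat.le_of_dvd (by omega) hdvd
              omega
          rw [hsum]
          by_cases hck : c = k
          · rw [if_pos (hTempty.mpr hck), if_pos ⟨hck, hak.1⟩, one_mul]
          · rw [if_neg (fun h => hck (hTempty.mp h)), if_neg (fun h => hck h.1), zero_mul]
        · rw [if_neg (fun h : c = k ∧ c ∣ a => hak ⟨h.2, h.1 ▸ dvd_rfl⟩)]
          refine Finset.sum_eq_zero fun J hJ => ?_
          have hnot : ¬ c ∣ g J := by rw [hiff J hJ]; tauto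
          rw [if_neg hnot]
    _ = if k ∣ d ∧ k ∣ a then B k else 0 := by
        by_cases hka : k ∣ a
        · have hcongr : ∀ c, (if c = k ∧ c ∣ a then B c else 0)
              = if c = k then B k else 0 := fun c => by
            by_cases h : c = k
            · subst h; simp [hka]
            · simp [h]
          rw [Finset.sum_congr rfl (fun c _ => hcongr c),
            Finset.sum_ite_eq' d.divisors k (fun _ => B k)]
          by_cases hkd : k ∣ d
          · rw [if_pos (Nat.mem_divisors.mpr ⟨hkd, hd.ne'⟩), if_pos ⟨hkd, hka⟩]
          · rw [if_neg (fun h => hkd (Nat.mem_divisors.mp h).1),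
              if_neg (fun h : k ∣ d ∧ k ∣ a => hkd h.1)]
        · rw [if_neg (fun h : k ∣ d ∧ k ∣ a => hka h.2)]
          refine Finset.sum_eq_zero fun c _ => ?_
          rw [if_neg (fun h : c = k ∧ c ∣ a => hka (h.1 ▸ h.2))]

open Finset ArithmeticFunction in

private lemma main_general (A B : ℕ → ℚ)
    (hAB : ∀ n > 0, ∑ i ∈ n.divisors, B i = A n)
    (hB : ∀ n, B n = ∑ x ∈ n.divisorsAntidiagonal, (moebius x.1 : ℚ) * A x.2)
    (hinner : ∀ d a k : ℕ, 0 < d → 0 < k →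
      ∑ l ∈ Finset.range k, (-1 : ℚ) ^ l *
          ∑ J ∈ (Finset.Icc 1 (k - 1)).powersetCard l,
            A (Nat.gcd d (Nat.gcd a (Nat.gcd k (J.gcd _root_.id))))
        = if k ∣ d ∧ k ∣ a then B k else 0)
    (hswap : ∀ d : ℕ, ∀ F : ℕ × ℕ → ℚ,
      ∑ k ∈ Nat.divisors d, ∑ x ∈ Nat.divisorsAntidiagonal k, F x
        = ∑ j ∈ Nat.divisors d, ∑ s ∈ Nat.divisors (d / j), F (s, j))
    (d : ℕ) (hd : 0 < d) :
    ∑ k ∈ Finset.Icc 1 d, ∑ a ∈ Finset.Icc 1 d, (1 / (k : ℚ)) *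
        ∑ l ∈ Finset.range k, (-1 : ℚ) ^ l *
          ∑ J ∈ (Finset.Icc 1 (k - 1)).powersetCard l,
            A (Nat.gcd d (Nat.gcd a (Nat.gcd k (J.gcd _root_.id))))
      = (d : ℚ) * ∑ j ∈ Nat.divisors d,
          (A j / (j : ℚ) ^ 2) * ∑ s ∈ Nat.divisors (d / j), (moebius s : ℚ) / (s : ℚ) ^ 2 := by
  calc ∑ k ∈ Finset.Icc 1 d, ∑ a ∈ Finset.Icc 1 d, (1 / (k : ℚ)) *
        ∑ l ∈ Finset.range k, (-1 : ℚ) ^ l *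
          ∑ J ∈ (Finset.Icc 1 (k - 1)).powersetCard l,
            A (Nat.gcd d (Nat.gcd a (Nat.gcd k (J.gcd _root_.id))))
      = ∑ k ∈ Finset.Icc 1 d, ∑ a ∈ Finset.Icc 1 d, (1 / (k : ℚ)) *
          (if k ∣ d ∧ k ∣ a then B k else 0) := by
        refine Finset.sum_congr rfl fun k hk => Finset.sum_congr rfl fun a _ => ?_
        rw [Finset.mem_Icc] at hk
        exact congrArg (fun x => (1 / (k : ℚ)) * x) (hinner d a k hd (by omega))
    _ = ∑ k ∈ Finset.Icc 1 d,
          (if k ∣ d then ((d / k : ℕ) : ℚ) * ((1 / (k : ℚ)) * B k) else 0) := by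
        refine Finset.sum_congr rfl fun k _ => ?_
        by_cases hkd : k ∣ d
        · rw [if_pos hkd]
          have hstep : ∀ a, (1 / (k : ℚ)) * (if k ∣ d ∧ k ∣ a then B k else 0)
              = if k ∣ a then (1 / (k : ℚ)) * B k else 0 := fun a => by
            by_cases h : k ∣ a <;> simp [h, hkd]
          rw [Finset.sum_congr rfl fun a _ => hstep a, ← Finset.sum_filter,
            Finset.sum_const]
          have hIcc : Finset.Icc 1 d = Finset.Ioc 0 d := by
            ext x; simp only [Finset.mem_Icc, Finset.mem_Ioc]; omega
          rw [hIcc, Nat.Ioc_filter_dvd_card_eq_div, nsmul_eq_mul]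
        · rw [if_neg hkd]
          exact Finset.sum_eq_zero fun a _ => by simp [hkd]
    _ = ∑ k ∈ Nat.divisors d, ((d / k : ℕ) : ℚ) * ((1 / (k : ℚ)) * B k) := by
        have hfd : Finset.filter (fun k => k ∣ d) (Finset.Icc 1 d) = Nat.divisors d := by
          ext x
          simp only [Finset.mem_filter, Finset.mem_Icc, Nat.mem_divisors]
          constructor
          · rintro ⟨⟨_, _⟩, hx⟩; exact ⟨hx, hd.ne'⟩
          · rintro ⟨hx, _⟩
            have hx0 : x ≠ 0 := by rintro rfl; rw [zero_dvd_iff] at hx; omega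
            exact ⟨⟨Nat.one_le_iff_ne_zero.mpr hx0, Nat.le_of_dvd hd hx⟩, hx⟩
        rw [← Finset.sum_filter, hfd]
    _ = (d : ℚ) * ∑ k ∈ Nat.divisors d, B k / (k : ℚ) ^ 2 := by
        rw [Finset.mul_sum]
        refine Finset.sum_congr rfl fun k hk => ?_
        have hk0 : (k : ℚ) ≠ 0 := Nat.cast_ne_zero.mpr (Nat.pos_of_mem_divisors hk).ne'
        have hkd := (Nat.mem_divisors.mp hk).1
        rw [Nat.cast_div hkd hk0]
        ring
    _ = (d : ℚ) * ∑ j ∈ Nat.divisors d,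
          (A j / (j : ℚ) ^ 2) * ∑ s ∈ Nat.divisors (d / j), (moebius s : ℚ) / (s : ℚ) ^ 2 := by
        congr 1
        calc ∑ k ∈ Nat.divisors d, B k / (k : ℚ) ^ 2
            = ∑ k ∈ Nat.divisors d, ∑ x ∈ Nat.divisorsAntidiagonal k,
                ((moebius x.1 : ℚ) * A x.2) / ((x.1 * x.2 : ℕ) : ℚ) ^ 2 := by
              refine Finset.sum_congr rfl fun k hk => ?_
              rw [hB k, Finset.sum_div]
              refine Finset.sum_congr rfl fun x hx => ?_
              rw [(Nat.mem_divisorsAntidiagonal.mp hx).1]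
          _ = ∑ j ∈ Nat.divisors d, ∑ s ∈ Nat.divisors (d / j),
                ((moebius s : ℚ) * A j) / ((s * j : ℕ) : ℚ) ^ 2 :=
              hswap d (fun x => ((moebius x.1 : ℚ) * A x.2) / ((x.1 * x.2 : ℕ) : ℚ) ^ 2)
          _ = ∑ j ∈ Nat.divisors d,
                (A j / (j : ℚ) ^ 2) * ∑ s ∈ Nat.divisors (d / j),
                  (moebius s : ℚ) / (s : ℚ) ^ 2 := by
              refine Finset.sum_congr rfl fun j _ => ?_
              rw [Finset.mul_sum]
              refine Finset.sum_congr rfl fun s _ => ?_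
              push_cast
              ring

open ArithmeticFunction in
/-- **The two expressions for the class number agree.**
Let `e` be a squarefree positive integer, `t` an integer whose residue class mod `e` has
multiplicative order `d` in `(ℤ/eℤ)ˣ`, and `α j = gcd (e, t^j - 1)`.  Then, in `ℚ`,
`∑_{k=1}^d ∑_{a=1}^d (1/k) ∑_{l=0}^{k-1} (-1)^l ∑_{j₁<⋯<j_l ≤ k-1} α_{gcd(d,a,k,j₁,…,j_l)}`
`= d * ∑_{j ∣ d} (α j / j²) * ∑_{s ∣ d/j} μ(s)/s²`,
where `μ` is the Möbius function; the inner sum runs over all strictly increasing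
sequences of `l` positive integers below `k` (i.e. over `l`-element subsets of
`{1, …, k-1}`), having the single term `α_{gcd(d,a,k)}` when `l = 0`. -/
theorem inclusion_exclusion_sum_eq_moebius_sum (e d : ℕ) (he : 0 < e) (hd : 0 < d)
    (hsq : Squarefree e) (t : ℤ) (u : (ZMod e)ˣ)
    (hu : (u : ZMod e) = (t : ZMod e)) (hord : orderOf u = d) :
    ∑ k ∈ Finset.Icc 1 d, ∑ a ∈ Finset.Icc 1 d, (1 / (k : ℚ)) *
        ∑ l ∈ Finset.range k, (-1 : ℚ) ^ l *
          ∑ J ∈ (Finset.Icc 1 (k - 1)).powersetCard l,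
            (Int.gcd (e : ℤ) (t ^ (Nat.gcd d (Nat.gcd a (Nat.gcd k (J.gcd _root_.id)))) - 1) : ℚ)
      = (d : ℚ) * ∑ j ∈ Nat.divisors d,
          ((Int.gcd (e : ℤ) (t ^ j - 1) : ℚ) / (j : ℚ) ^ 2) *
            ∑ s ∈ Nat.divisors (d / j), (moebius s : ℚ) / (s : ℚ) ^ 2 := by
  have hAB : ∀ n > 0, ∑ i ∈ Nat.divisors n,
      (∑ x ∈ Nat.divisorsAntidiagonal i,
        (moebius x.1 : ℚ) * (Int.gcd (e : ℤ) (t ^ x.2 - 1) : ℚ))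
      = (Int.gcd (e : ℤ) (t ^ n - 1) : ℚ) :=
    ArithmeticFunction.sum_eq_iff_sum_mul_moebius_eq.mpr fun n _ => rfl
  exact main_general (fun m => (Int.gcd (e : ℤ) (t ^ m - 1) : ℚ))
    (fun n => ∑ x ∈ Nat.divisorsAntidiagonal n,
      (moebius x.1 : ℚ) * (Int.gcd (e : ℤ) (t ^ x.2 - 1) : ℚ))
    hAB (fun n => rfl)
    (fun d' a k hd' hk => inner_incl_excl _ _ hAB d' a k hd' hk)
    sum_divisors_antidiag_swap d hd
end

section
/- Let e be a squarefree positive integer, t an integer whose residue class modulo e has multiplicative order d in (ℤ/eℤ)ˣ, and set α_j = gcd(e, t^j − 1). Fix a positive integer a ≤ d and a nonempty finite set J = {j₁, …, j_m} of positive integers. Then the number of residues b ∈ ℤ/eℤ such that α_a / gcd(α_a, α_j) divides b for every j ∈ J equals e · α_{gcd(a, j₁, …, j_m)} / α_a. -/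
/-- `α s = gcd (e, t^s - 1)`. -/
def alphaSeq (e : ℕ) (t : ℤ) (s : ℕ) : ℕ := Int.gcd (e : ℤ) (t ^ s - 1)

/-!
An integer `n` divides `α_s` exactly when `n ∣ e` and the order of `t` modulo `n` divides `s`;
hence `gcd (α_a, α_{j₁}, …, α_{j_m}) = α_g` for `g = gcd (a, j₁, …, j_m)`. With `A = α_a`, the
condition `A / gcd (A, y) ∣ b` is equivalent to `A ∣ y b`, so the conditions for all `j ∈ J`
combine into `A ∣ gcd_j (α_j) · b`, i.e. into the single condition `A / α_g ∣ b`; and `ℤ/eℤ`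
contains `e / m` multiples of a divisor `m` of `e`.
-/

namespace ZMod

variable {e : ℕ} [NeZero e]

theorem natCast_dvd_iff_dvd_val {m : ℕ} (hm : m ∣ e) (b : ZMod e) :
    (m : ZMod e) ∣ b ↔ m ∣ b.val := by
  constructor
  · rintro ⟨c, rfl⟩
    rw [val_mul, val_natCast, Nat.dvd_mod_iff hm]
    exact ((Nat.dvd_mod_iff hm).mpr dvd_rfl).mul_right _
  · rintro ⟨c, hc⟩
    exact ⟨c, by rw [← natCast_zmod_val b, hc, Nat.cast_mul]⟩

theorem card_natCast_dvd {L : ℕ} (hL : L ∣ e) :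
    Nat.card {b : ZMod e // (L : ZMod e) ∣ b} = e / L := by
  have : NeZero L := ⟨fun h => NeZero.ne e (Nat.eq_zero_of_zero_dvd (h ▸ hL))⟩
  let f := (castHom hL (ZMod L)).toAddMonoidHom
  have hker : ∀ b, (L : ZMod e) ∣ b ↔ b ∈ f.ker := fun b => by
    rw [natCast_dvd_iff_dvd_val hL, AddMonoidHom.mem_ker,
      show f b = (b.val : ZMod L) from cast_eq_val b, natCast_eq_zero_iff]
  have hcard := f.ker.card_mul_index
  rw [AddSubgroup.index_ker, AddMonoidHom.range_eq_top.mpr (castHom_surjective hL),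
    AddSubgroup.card_top, Nat.card_zmod, Nat.card_zmod] at hcard
  rw [Nat.card_congr (Equiv.subtypeEquivRight hker)]
  exact (Nat.div_eq_of_eq_mul_left (Nat.pos_of_neZero L) hcard.symm).symm

end ZMod

theorem Nat.div_div_eq_mul_div_of_dvd {a b c : ℕ} (hcb : c ∣ b) (hba : b ∣ a) :
    a / (b / c) = a * c / b := by
  obtain ⟨k, rfl⟩ := hcb
  obtain ⟨m, rfl⟩ := hba
  rcases Nat.eq_zero_or_pos c with rfl | hc
  · simp
  rcases Nat.eq_zero_or_pos k with rfl | hk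
  · simp
  rw [Nat.mul_div_cancel_left k hc, show c * k * m = c * m * k by ring, Nat.mul_div_cancel _ hk,
    show c * m * k * c = c * k * (c * m) by ring, Nat.mul_div_cancel_left _ (Nat.mul_pos hc hk)]

theorem Nat.div_gcd_dvd_iff_dvd_mul {A y v : ℕ} (hA : 0 < A) :
    A / A.gcd y ∣ v ↔ A ∣ y * v := by
  rw [Nat.div_dvd_iff_dvd_mul (A.gcd_dvd_left y) (Nat.gcd_pos_of_pos_left y hA)]
  exact dvd_gcd_mul_iff_dvd_mul

theorem Finset.forall_div_gcd_dvd_iff {ι : Type*} {A v : ℕ} (hA : 0 < A) (J : Finset ι)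
    (y : ι → ℕ) : (∀ j ∈ J, A / A.gcd (y j) ∣ v) ↔ A / A.gcd (J.gcd y) ∣ v := by
  simp only [Nat.div_gcd_dvd_iff_dvd_mul hA, ← Finset.dvd_gcd_iff, Finset.gcd_mul_right,
    normalize_eq]

section alphaSeq

variable (e : ℕ) (t : ℤ)

theorem dvd_alphaSeq_iff (n s : ℕ) :
    n ∣ alphaSeq e t s ↔ n ∣ e ∧ orderOf (t : ZMod n) ∣ s := by
  rw [alphaSeq, Int.dvd_gcd_iff, Int.natCast_dvd_natCast, orderOf_dvd_iff_pow_eq_one,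
    ← ZMod.intCast_zmod_eq_zero_iff_dvd, Int.cast_sub, Int.cast_pow, Int.cast_one, sub_eq_zero]

theorem alphaSeq_dvd (s : ℕ) : alphaSeq e t s ∣ e :=
  ((dvd_alphaSeq_iff e t _ s).mp dvd_rfl).1

theorem gcd_alphaSeq_finsetGcd (a : ℕ) (J : Finset ℕ) :
    (alphaSeq e t a).gcd (J.gcd (alphaSeq e t)) = alphaSeq e t (a.gcd (J.gcd id)) := by
  refine eq_of_forall_dvd' fun n => ?_
  simp only [Nat.dvd_gcd_iff, Finset.dvd_gcd_iff, dvd_alphaSeq_iff, id]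
  grind

end alphaSeq

theorem card_residues_divisible_general (e : ℕ) (he : 0 < e) (t : ℤ) (a : ℕ) (J : Finset ℕ) :
    Nat.card {b : ZMod e // ∀ j ∈ J,
        ((alphaSeq e t a / Nat.gcd (alphaSeq e t a) (alphaSeq e t j) : ℕ) : ZMod e) ∣ b}
      = e * alphaSeq e t (Nat.gcd a (J.gcd id)) / alphaSeq e t a := by
  have : NeZero e := ⟨he.ne'⟩
  set A := alphaSeq e t a
  have hAe : A ∣ e := alphaSeq_dvd e t a
  have hA : 0 < A := Nat.pos_of_dvd_of_pos hAe he
  have hdiv_dvd (y : ℕ) : A / A.gcd y ∣ e := (Nat.div_dvd_of_dvd (A.gcd_dvd_left y)).trans hAe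
  have hcond (b : ZMod e) : (∀ j ∈ J, ((A / A.gcd (alphaSeq e t j) : ℕ) : ZMod e) ∣ b) ↔
      ((A / A.gcd (J.gcd (alphaSeq e t)) : ℕ) : ZMod e) ∣ b := by
    simp only [ZMod.natCast_dvd_iff_dvd_val (hdiv_dvd _)]
    exact Finset.forall_div_gcd_dvd_iff hA J _
  rw [Nat.card_congr (Equiv.subtypeEquivRight hcond), ZMod.card_natCast_dvd (hdiv_dvd _),
    gcd_alphaSeq_finsetGcd, ← gcd_alphaSeq_finsetGcd]
  exact Nat.div_div_eq_mul_div_of_dvd (Nat.gcd_dvd_left _ _) hAe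

/-- **Counting residues satisfying the intersection of divisibility conditions.**
Let `e` be squarefree, `t` of multiplicative order `d` modulo `e`, `α j = gcd (e, t^j - 1)`.
Fix a positive `a ≤ d` and a nonempty finite set `J` of positive integers.  The number of
residues `b ∈ ℤ/eℤ` such that `α a / gcd (α a, α j)` divides `b` for every `j ∈ J`
equals `e * α (gcd (a, j₁, …, j_m)) / α a`. -/
theorem card_residues_divisible (e d : ℕ) (he : 0 < e) (hsq : Squarefree e) (t : ℤ)
    (u : (ZMod e)ˣ) (hu : (u : ZMod e) = (t : ZMod e)) (hord : orderOf u = d)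
    (a : ℕ) (ha : 0 < a) (had : a ≤ d) (J : Finset ℕ) (hJ : J.Nonempty)
    (hJpos : ∀ j ∈ J, 0 < j) :
    Nat.card {b : ZMod e // ∀ j ∈ J,
        ((alphaSeq e t a / Nat.gcd (alphaSeq e t a) (alphaSeq e t j) : ℕ) : ZMod e) ∣ b}
      = e * alphaSeq e t (Nat.gcd a (J.gcd id)) / alphaSeq e t a :=
  card_residues_divisible_general e he t a J
end

section
/- Let n = d·e be a squarefree positive integer, let t be an integer whose residue class modulo e has multiplicative order d in (ℤ/eℤ)ˣ, and let G = G(d,e,t). Then the number k(G) of conjugacy classes of G satisfies d ≤ k(G) and e ≤ d·k(G). -/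
/-!
Conjugacy classes map onto those of the quotient `ℤ/dℤ`, which is abelian, so `d ≤ k(G)`.
Two elements of the abelian normal subgroup `ℤ/eℤ` are conjugate in `G` only if they lie in one
orbit of `ℤ/dℤ`, so each conjugacy class meets `ℤ/eℤ` in at most `d` elements and `e ≤ d k(G)`.
-/

open Finset SemidirectProduct

lemma card_conjClasses_le_of_surjective {G H : Type*} [Group G] [Group H] [Finite G]
    {f : G →* H} (hf : Function.Surjective f) :
    Nat.card (ConjClasses H) ≤ Nat.card (ConjClasses G) :=
  Nat.card_le_card_of_surjective _ (ConjClasses.map_surjective hf)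

lemma CommGroup.card_conjClasses (G : Type*) [CommGroup G] :
    Nat.card (ConjClasses G) = Nat.card G :=
  Nat.card_congr ConjClasses.mkEquiv.symm

namespace SemidirectProduct

variable {N G : Type*} [Group G]

instance [Group N] [Finite N] [Finite G] {φ : G →* MulAut N} : Finite (N ⋊[φ] G) :=
  Finite.of_equiv _ equivProd.symm

lemma isConj_inl_iff [CommGroup N] {φ : G →* MulAut N} {n n' : N} :
    IsConj (inl n : N ⋊[φ] G) (inl n') ↔ ∃ g : G, φ g n = n' := by
  constructor
  · rintro ⟨c, hc⟩
    refine ⟨(c : N ⋊[φ] G).right, ?_⟩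
    have hleft := congrArg SemidirectProduct.left hc.eq
    simp only [mul_left, left_inl, right_inl, map_one, MulAut.one_apply] at hleft
    exact mul_left_cancel (hleft.trans (mul_comm _ _))
  · rintro ⟨g, rfl⟩
    exact isConj_iff.mpr ⟨inr g, by rw [inl_aut, map_inv]⟩

lemma card_le_card_mul_card_conjClasses [CommGroup N] [Finite N] [Finite G]
    (φ : G →* MulAut N) :
    Nat.card N ≤ Nat.card G * Nat.card (ConjClasses (N ⋊[φ] G)) := by
  classical
  have := Fintype.ofFinite N
  have := Fintype.ofFinite G
  have := Fintype.ofFinite (ConjClasses (N ⋊[φ] G))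
  let f : N → ConjClasses (N ⋊[φ] G) := fun n => ConjClasses.mk (inl n)
  have hfiber (n₀ : N) : #{n | f n = f n₀} ≤ Fintype.card G :=
    calc #{n | f n = f n₀}
        ≤ #(univ.image fun g : G => φ g n₀) := card_le_card fun n hn => by
          obtain ⟨g, hg⟩ :=
            isConj_inl_iff.mp (ConjClasses.mk_eq_mk_iff_isConj.mp (mem_filter.mp hn).2.symm)
          exact mem_image.mpr ⟨g, mem_univ g, hg⟩
      _ ≤ Fintype.card G := card_image_le
  calc Nat.card N = #(univ : Finset N) := by rw [card_univ, Nat.card_eq_fintype_card]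
    _ ≤ Fintype.card G * #(univ.image f) := card_le_mul_card_image _ _ fun c hc => by
          obtain ⟨n₀, -, rfl⟩ := mem_image.mp hc
          exact hfiber n₀
    _ ≤ Nat.card G * Nat.card (ConjClasses (N ⋊[φ] G)) := by
          rw [Nat.card_eq_fintype_card, Nat.card_eq_fintype_card]
          exact Nat.mul_le_mul_left _ (card_le_univ _)

end SemidirectProduct

theorem classNumber_bounds (d e : ℕ) (he : 0 < e) (u : (ZMod e)ˣ) (hord : orderOf u = d) :
    d ≤ Nat.card (ConjClasses (Gdet d e u (by rw [← hord]; exact pow_orderOf_eq_one u))) ∧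
    e ≤ d * Nat.card (ConjClasses (Gdet d e u (by rw [← hord]; exact pow_orderOf_eq_one u))) := by
  have : NeZero e := ⟨he.ne'⟩
  have : NeZero d := ⟨hord ▸ (orderOf_pos u).ne'⟩
  constructor
  · calc d = Nat.card (ConjClasses (Multiplicative (ZMod d))) := by
          rw [CommGroup.card_conjClasses, Nat.card_eq_fintype_card, Fintype.card_multiplicative,
            ZMod.card]
      _ ≤ _ := card_conjClasses_le_of_surjective rightHom_surjective
  · simpa using card_le_card_mul_card_conjClasses
      ((unitsMulAut e).comp (zmodPowHom d u (by rw [← hord]; exact pow_orderOf_eq_one u)))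
end

section
/- Let n = d·e be a squarefree positive integer and let t be an integer whose residue class modulo e has multiplicative order d in (ℤ/eℤ)ˣ. For any element (b, a) of G(d,e,t), the size of its conjugacy class C satisfies e / α_a ≤ |C| ≤ d·e / α_a, where α_a = gcd(e, t^a − 1). -/
/-! Conjugating `(b, a)` by `(c, s)` in `G(d,e,t)` gives `((1 - t^a) c + t^s b, a)`. Hence the
class lies in the union of the cosets `t^s b + (1 - t^a)ℤ/eℤ`, `s ∈ ℤ/dℤ`, and contains the one
with `s = 0`; the subgroup `(1 - t^a)ℤ/eℤ` has order `e / α_a`. In any semidirect product of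
abelian groups the same computation holds with `1 - t^a` replaced by `c ↦ c / φ g c`. -/

namespace SemidirectProduct

variable {N G : Type*} [CommGroup N] [CommGroup G] (φ : G →* MulAut N)

def commutatorHom (g : G) : N →* N := MonoidHom.id N / (φ g).toMonoidHom

theorem commutatorHom_apply (g : G) (c : N) : commutatorHom φ g c = c / φ g c := rfl

theorem mk_conj (c n : N) (s g : G) :
    (⟨c, s⟩ : N ⋊[φ] G) * ⟨n, g⟩ * (⟨c, s⟩ : N ⋊[φ] G)⁻¹ = ⟨commutatorHom φ g c * φ s n, g⟩ := by
  ext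
  · simp only [mul_left, mul_right, inv_left, commutatorHom_apply]
    rw [← MulAut.mul_apply, ← map_mul, mul_inv_cancel_comm, map_inv, div_eq_mul_inv,
      mul_right_comm]
  · exact mul_inv_cancel_comm s g

theorem conjugatesOf_mk (n : N) (g : G) :
    conjugatesOf (⟨n, g⟩ : N ⋊[φ] G) =
      Set.range fun p : (commutatorHom φ g).range × G => (⟨p.1 * φ p.2 n, g⟩ : N ⋊[φ] G) := by
  ext x
  simp only [conjugatesOf, Set.mem_ofPred_eq, isConj_iff, Set.mem_range, Prod.exists,
    Subtype.exists, MonoidHom.mem_range, exists_prop, exists_exists_eq_and]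
  constructor
  · rintro ⟨⟨c, s⟩, rfl⟩
    exact ⟨c, s, (mk_conj φ c n s g).symm⟩
  · rintro ⟨c, s, rfl⟩
    exact ⟨⟨c, s⟩, mk_conj φ c n s g⟩

variable [Finite N] [Finite G]

theorem card_range_commutatorHom_le_card_conjugatesOf (n : N) (g : G) :
    Nat.card (commutatorHom φ g).range ≤ Nat.card (conjugatesOf (⟨n, g⟩ : N ⋊[φ] G)) := by
  rw [conjugatesOf_mk]
  refine Nat.card_le_card_of_injective (fun h => ⟨_, (h, 1), rfl⟩) fun h₁ h₂ hh => ?_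
  simpa using congrArg left (congrArg Subtype.val hh)

theorem card_conjugatesOf_le (n : N) (g : G) :
    Nat.card (conjugatesOf (⟨n, g⟩ : N ⋊[φ] G)) ≤
      Nat.card (commutatorHom φ g).range * Nat.card G := by
  rw [conjugatesOf_mk, ← Nat.card_prod]
  exact Finite.card_range_le _

end SemidirectProduct

theorem ZMod.range_mulLeft {n : ℕ} (v : ZMod n) :
    (AddMonoidHom.mulLeft v).range = AddSubgroup.zmultiples v := by
  ext x
  simp only [AddMonoidHom.mem_range, AddMonoidHom.coe_mulLeft, AddSubgroup.mem_zmultiples_iff,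
    zsmul_eq_mul]
  constructor
  · rintro ⟨c, rfl⟩
    obtain ⟨k, rfl⟩ := ZMod.intCast_surjective c
    exact ⟨k, mul_comm _ _⟩
  · rintro ⟨k, rfl⟩
    exact ⟨k, mul_comm _ _⟩

theorem ZMod.addOrderOf_intCast {n : ℕ} (hn : n ≠ 0) (k : ℤ) :
    addOrderOf (k : ZMod n) = n / Int.gcd n k := by
  rcases Int.natAbs_eq k with h | h <;> rw [h]
  · rw [Int.cast_natCast, ZMod.addOrderOf_coe _ hn, Int.gcd_natCast_natCast]
  · rw [Int.cast_neg, Int.cast_natCast, addOrderOf_neg, ZMod.addOrderOf_coe _ hn, Int.gcd_neg,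
      Int.gcd_natCast_natCast]

theorem zmodPowHom_ofAdd_natCast {e : ℕ} (d : ℕ) (u : (ZMod e)ˣ) (hu : u ^ d = 1) (s : ℕ) :
    zmodPowHom d u hu (Multiplicative.ofAdd (s : ZMod d)) = u ^ s := by
  rw [← Int.cast_natCast]
  simp only [zmodPowHom, AddMonoidHom.toMultiplicativeLeft_apply_apply, toAdd_ofAdd,
    ZMod.lift_coe]
  simp

theorem Gdet.commutatorHom_ofAdd_natCast {d e : ℕ} (u : (ZMod e)ˣ) (hu : u ^ d = 1) (a : ℕ) :
    SemidirectProduct.commutatorHom ((unitsMulAut e).comp (zmodPowHom d u hu))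
        (Multiplicative.ofAdd (a : ZMod d)) =
      AddMonoidHom.toMultiplicative (AddMonoidHom.mulLeft (1 - (u : ZMod e) ^ a)) := by
  ext c
  simp [SemidirectProduct.commutatorHom_apply, zmodPowHom_ofAdd_natCast, unitsMulAut,
    Units.smul_def, sub_mul]

theorem Gdet.card_range_commutatorHom {d e : ℕ} (he : e ≠ 0) (t : ℤ) (u : (ZMod e)ˣ)
    (hu : (u : ZMod e) = (t : ZMod e)) (hud : u ^ d = 1) (a : ℕ) :
    Nat.card (SemidirectProduct.commutatorHom ((unitsMulAut e).comp (zmodPowHom d u hud))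
        (Multiplicative.ofAdd (a : ZMod d))).range = e / Int.gcd e (t ^ a - 1) := by
  have hv : 1 - (u : ZMod e) ^ a = ((-(t ^ a - 1) : ℤ) : ZMod e) := by push_cast [hu]; ring
  rw [Gdet.commutatorHom_ofAdd_natCast, MonoidHom.coe_toMultiplicative_range]
  change Nat.card (AddMonoidHom.mulLeft (1 - (u : ZMod e) ^ a)).range = _
  rw [ZMod.range_mulLeft, Nat.card_zmultiples, hv, ZMod.addOrderOf_intCast he, Int.gcd_neg]

/-- **Bounds on conjugacy class sizes in `G(d,e,t)`.**
Let `n = d * e` be squarefree and `t` an integer whose residue class mod `e` has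
multiplicative order `d` in `(ℤ/eℤ)ˣ`.  For any element `(b, a)` of `G(d,e,t)`, the size
of its conjugacy class `C` satisfies `e / α_a ≤ |C| ≤ d * e / α_a`,
where `α_a = gcd (e, t^a - 1)`. -/
theorem classSize_bounds (d e : ℕ) (he : 0 < e) (t : ℤ) (u : (ZMod e)ˣ)
    (hu : (u : ZMod e) = (t : ZMod e)) (hord : orderOf u = d)
    (b : ZMod e) (a : ℕ) :
    e / Int.gcd (e : ℤ) (t ^ a - 1)
        ≤ Nat.card (conjugatesOf
            (⟨Multiplicative.ofAdd b, Multiplicative.ofAdd (a : ZMod d)⟩ :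
              Gdet d e u (by rw [← hord]; exact pow_orderOf_eq_one u))) ∧
    Nat.card (conjugatesOf
        (⟨Multiplicative.ofAdd b, Multiplicative.ofAdd (a : ZMod d)⟩ :
          Gdet d e u (by rw [← hord]; exact pow_orderOf_eq_one u)))
      ≤ d * e / Int.gcd (e : ℤ) (t ^ a - 1) := by
  have : NeZero e := ⟨he.ne'⟩
  have : NeZero d := ⟨hord ▸ (orderOf_pos u).ne'⟩
  have hud : u ^ d = 1 := hord ▸ pow_orderOf_eq_one u
  have hcard := Gdet.card_range_commutatorHom he.ne' t u hu hud a
  have hdvd : Int.gcd e (t ^ a - 1) ∣ e := Int.ofNat_dvd.mp (Int.gcd_dvd_left _ _)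
  refine ⟨hcard ▸ SemidirectProduct.card_range_commutatorHom_le_card_conjugatesOf _ _ _, ?_⟩
  calc _ ≤ _ := SemidirectProduct.card_conjugatesOf_le _ _ _
    _ = e / Int.gcd e (t ^ a - 1) * d := by
      rw [hcard, Nat.card_congr Multiplicative.toAdd, Nat.card_zmod]
    _ = d * e / Int.gcd e (t ^ a - 1) := by rw [Nat.mul_div_assoc d hdvd, mul_comm]
end

section
/- Let p < q < r be primes with q dividing r − 1, and let t be an integer whose residue class modulo pr is a unit of multiplicative order q, with t ≡ 1 modulo p and t of order q modulo r. Then the group G(q, pr, t) has exactly p·q + p·(r − 1)/q conjugacy classes. -/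
section ProportionalPairs

variable {R S : Type*}

lemma card_mul_fst_eq_mul_snd_congr [Mul R] [Mul S] (f : R ≃* S) (α β : R) :
    Nat.card {b : S × S // f α * b.1 = f β * b.2}
      = Nat.card {b : R × R // α * b.1 = β * b.2} :=
  Nat.card_congr <| (Equiv.subtypeEquiv (f.toEquiv.prodCongr f.toEquiv) fun b => by
    simp [← map_mul, f.injective.eq_iff]).symm

lemma card_mul_fst_eq_mul_snd_prod [Mul R] [Mul S] (α β : R × S) :
    Nat.card {b : (R × S) × (R × S) // α * b.1 = β * b.2}
      = Nat.card {b : R × R // α.1 * b.1 = β.1 * b.2}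
        * Nat.card {b : S × S // α.2 * b.1 = β.2 * b.2} := by
  rw [← Nat.card_prod]
  exact Nat.card_congr <| (Equiv.subtypeEquiv (Equiv.prodProdProdComm R S R S) fun b => by
    simp [Prod.ext_iff]).trans Equiv.subtypeProdEquivProd

lemma card_mul_fst_eq_mul_snd_zero [MulZeroClass R] :
    Nat.card {b : R × R // 0 * b.1 = 0 * b.2} = Nat.card R * Nat.card R := by
  simp [Nat.card_prod]

lemma card_mul_fst_eq_mul_snd_of_ne_zero [Field R] {α β : R} (hβ : β ≠ 0) :
    Nat.card {b : R × R // α * b.1 = β * b.2} = Nat.card R :=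
  Nat.card_congr
    { toFun b := b.1.1
      invFun x := ⟨(x, β⁻¹ * α * x), by field_simp⟩
      left_inv b := by ext <;> simp [mul_assoc, b.2, hβ]
      right_inv x := rfl }

lemma card_mul_fst_eq_mul_snd_comm [Mul R] (α β : R) :
    Nat.card {b : R × R // α * b.1 = β * b.2} = Nat.card {b : R × R // β * b.1 = α * b.2} :=
  Nat.card_congr <| Equiv.subtypeEquiv (Equiv.prodComm R R) fun _ => eq_comm

lemma card_mul_fst_eq_mul_snd [Field R] [DecidableEq R] (α β : R) :
    Nat.card {b : R × R // α * b.1 = β * b.2}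
      = if α = 0 ∧ β = 0 then Nat.card R * Nat.card R else Nat.card R := by
  split_ifs with h
  · rw [h.1, h.2, card_mul_fst_eq_mul_snd_zero]
  · by_cases hβ : β = 0
    · rw [card_mul_fst_eq_mul_snd_comm, card_mul_fst_eq_mul_snd_of_ne_zero (by tauto)]
    · exact card_mul_fst_eq_mul_snd_of_ne_zero hβ

end ProportionalPairs

lemma pow_val_eq_one_iff {M : Type*} [Monoid M] {x : M} {q : ℕ} [NeZero q]
    (hx : orderOf x = q) (a : ZMod q) : x ^ a.val = 1 ↔ a = 0 := by
  rw [← orderOf_dvd_iff_pow_eq_one, hx, ← ZMod.natCast_eq_zero_iff, ZMod.natCast_zmod_val]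

lemma Fintype.sum_ite_eq_add_nsmul {ι M : Type*} [Fintype ι] [DecidableEq ι] [AddCommMonoid M]
    (i₀ : ι) (A B : M) :
    ∑ i, (if i = i₀ then A else B) = A + (Fintype.card ι - 1) • B := by
  rw [Fintype.sum_eq_add_sum_compl i₀, if_pos rfl,
    Finset.sum_congr rfl fun i hi => if_neg (Finset.mem_compl.1 hi ∘ Finset.mem_singleton.2),
    Finset.sum_const, Finset.card_compl, Finset.card_singleton]

namespace Gdet

open Multiplicative

variable {d e : ℕ} {u : (ZMod e)ˣ} {hu : u ^ d = 1}

lemma zmodPowHom_apply [NeZero d] (x : Multiplicative (ZMod d)) :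
    zmodPowHom d u hu x = u ^ x.toAdd.val := by
  have hx : x.toAdd = ((x.toAdd.val : ℤ) : ZMod d) := by simp
  simp only [zmodPowHom, AddMonoidHom.toMultiplicativeLeft_apply_apply]
  conv_lhs => rw [hx, ZMod.lift_coe]
  change Additive.toMul ((x.toAdd.val : ℤ) • Additive.ofMul u) = _
  rw [toMul_zsmul, toMul_ofMul, zpow_natCast]

lemma commute_iff_s18 (g h : Gdet d e u hu) :
    Commute g h ↔ (1 - (zmodPowHom d u hu h.right : ZMod e)) * g.left.toAdd
      = (1 - (zmodPowHom d u hu g.right : ZMod e)) * h.left.toAdd := by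
  rw [Commute, SemiconjBy, SemidirectProduct.ext_iff, ← toAdd.injective.eq_iff]
  simp only [SemidirectProduct.mul_left, SemidirectProduct.mul_right, mul_comm g.right, and_true]
  change g.left.toAdd + (zmodPowHom d u hu g.right : ZMod e) * h.left.toAdd
    = h.left.toAdd + (zmodPowHom d u hu h.right : ZMod e) * g.left.toAdd ↔ _
  constructor <;> intro H <;> linear_combination H

def commutingPairsEquiv [NeZero d] :
    {p : Gdet d e u hu × Gdet d e u hu // Commute p.1 p.2} ≃
      Σ a : ZMod d × ZMod d, {b : ZMod e × ZMod e //
        (1 - ((u ^ a.2.val : (ZMod e)ˣ) : ZMod e)) * b.1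
          = (1 - ((u ^ a.1.val : (ZMod e)ˣ) : ZMod e)) * b.2} where
  toFun p := ⟨(p.1.1.right.toAdd, p.1.2.right.toAdd), (p.1.1.left.toAdd, p.1.2.left.toAdd), by
    simpa only [zmodPowHom_apply] using (commute_iff_s18 _ _).1 p.2⟩
  invFun s := ⟨(⟨ofAdd s.2.1.1, ofAdd s.1.1⟩, ⟨ofAdd s.2.1.2, ofAdd s.1.2⟩), by
    simpa only [commute_iff_s18, zmodPowHom_apply, toAdd_ofAdd] using s.2.2⟩
  left_inv _ := rfl
  right_inv _ := rfl

lemma card_conjClasses_mul_card_eq_sum [NeZero d] [NeZero e] :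
    Nat.card (ConjClasses (Gdet d e u hu)) * (e * d)
      = ∑ a : ZMod d × ZMod d, Nat.card {b : ZMod e × ZMod e //
        (1 - ((u ^ a.2.val : (ZMod e)ˣ) : ZMod e)) * b.1
          = (1 - ((u ^ a.1.val : (ZMod e)ˣ) : ZMod e)) * b.2} := by
  rw [← Nat.card_sigma, ← Nat.card_congr (commutingPairsEquiv (hu := hu)),
    card_comm_eq_card_conjClasses_mul_card, SemidirectProduct.card]
  simp

end Gdet

lemma card_mul_fst_eq_mul_snd_one_sub_pow {p r : ℕ} (hpr : p.Coprime r) [Fact r.Prime] (t : ℤ)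
    {u : (ZMod (p * r))ˣ} (hu : (u : ZMod (p * r)) = t) (hp1 : (t : ZMod p) = 1)
    {ur : (ZMod r)ˣ} (hur : (ur : ZMod r) = t) (m n : ℕ) :
    Nat.card {b : ZMod (p * r) × ZMod (p * r) //
        (1 - ((u ^ m : (ZMod (p * r))ˣ) : ZMod (p * r))) * b.1
          = (1 - ((u ^ n : (ZMod (p * r))ˣ) : ZMod (p * r))) * b.2}
      = p * p * if ur ^ m = 1 ∧ ur ^ n = 1 then r * r else r := by
  have hχ (k : ℕ) :
      (ZMod.chineseRemainder hpr).toMulEquiv (1 - ((u ^ k : (ZMod (p * r))ˣ) : ZMod (p * r)))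
        = (0, 1 - ((ur ^ k : (ZMod r)ˣ) : ZMod r)) := by
    ext <;> simp [Units.val_pow_eq_pow_val, hu, hp1, hur]
  rw [← card_mul_fst_eq_mul_snd_congr (ZMod.chineseRemainder hpr).toMulEquiv, hχ, hχ,
    card_mul_fst_eq_mul_snd_prod, card_mul_fst_eq_mul_snd_zero, card_mul_fst_eq_mul_snd]
  simp only [sub_eq_zero, eq_comm (a := (1 : ZMod r)), Units.val_eq_one, Nat.card_zmod, mul_ite]

/-- **Class number of groups of order `pqr` with `d = q` (condition C).**
Let `p < q < r` be primes with `q ∣ r - 1`, and let `t` be an integer whose residue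
class modulo `p * r` is a unit of multiplicative order `q`, with `t ≡ 1` modulo `p` and
`t` of order `q` modulo `r`.  Then `G(q, pr, t)` has exactly
`p * q + p * (r - 1) / q` conjugacy classes. -/
theorem classNumber_pqr_condC (p q r : ℕ) (hp : p.Prime) (hq : q.Prime) (hr : r.Prime)
    (hpq : p < q) (hqr : q < r) (hC : q ∣ r - 1) (t : ℤ)
    (u : (ZMod (p * r))ˣ) (hu : (u : ZMod (p * r)) = (t : ZMod (p * r)))
    (hord : orderOf u = q)
    (hp1 : (t : ZMod p) = 1)
    (ur : (ZMod r)ˣ) (hur : (ur : ZMod r) = (t : ZMod r)) (hordr : orderOf ur = q) :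
    Nat.card (ConjClasses
        (Gdet q (p * r) u (by rw [← hord]; exact pow_orderOf_eq_one u)))
      = p * q + p * ((r - 1) / q) := by
  have : NeZero p := ⟨hp.ne_zero⟩
  have : NeZero q := ⟨hq.ne_zero⟩
  have : NeZero r := ⟨hr.ne_zero⟩
  have : Fact r.Prime := ⟨hr⟩
  have hpr : p.Coprime r := (Nat.coprime_primes hp hr).2 (by omega)
  have huq : u ^ q = 1 := hord ▸ pow_orderOf_eq_one u
  have hcount : Nat.card (ConjClasses (Gdet q (p * r) u huq)) * (p * r * q)
      = p * p * (r * r + (q * q - 1) * r) := by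
    have hzero (a : ZMod q × ZMod q) : a.2 = 0 ∧ a.1 = 0 ↔ a = 0 :=
      and_comm.trans (Prod.ext_iff (y := 0)).symm
    have h := Gdet.card_conjClasses_mul_card_eq_sum (hu := huq)
    simp only [card_mul_fst_eq_mul_snd_one_sub_pow hpr t hu hp1 hur, pow_val_eq_one_iff hordr,
      hzero] at h
    rwa [← Finset.mul_sum, Fintype.sum_ite_eq_add_nsmul, Fintype.card_prod, ZMod.card,
      smul_eq_mul] at h
  obtain ⟨m, hm⟩ := hC
  have hr1 : r = q * m + 1 := by have := hr.one_lt; omega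
  obtain ⟨s, hs⟩ : ∃ s, q * q = s + 1 :=
    ⟨q * q - 1, (Nat.sub_add_cancel (Nat.mul_pos hq.pos hq.pos)).symm⟩
  rw [hm, Nat.mul_div_cancel_left _ hq.pos]
  refine Nat.eq_of_mul_eq_mul_right (Nat.mul_pos (Nat.mul_pos hp.pos hr.pos) hq.pos) ?_
  rw [hcount, hs, Nat.add_sub_cancel, hr1]
  linear_combination (p * p * (q * m + 1)) * hs.symm
end
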